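/- arXiv:2209.06591 — 5 statements merged into one kernel-verified Lean document; each statement's English description precedes it below -/
import Mathlib

section
/- A matroid M has a positive double circuit if and only if its dual M* has a positive coline. -/
open Set Matroid

namespace Paper

variable {α : Type*}

/-- A circuit of a matroid: a minimal dependent set. -/
def IsCircuit (M : Matroid α) (C : Set α) : Prop :=
  M.Dep C ∧ ∀ x ∈ C, M.Indep (C \ {x})

/-- The rank of a set: the largest cardinality of an independent subset. -/
noncomputable def rk (M : Matroid α) (X : Set α) : ℕ :=
  sSup {n : ℕ | ∃ I, I ⊆ X ∧ M.Indep I ∧ I.ncard = n}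

/-- A double circuit: a (finite) set `D` with `r(D) = |D| - 2` such that deleting any
single element does not decrease the rank. -/
def DoubleCircuit (M : Matroid α) (D : Set α) : Prop :=
  D ⊆ M.E ∧ D.Finite ∧ rk M D + 2 = D.ncard ∧ ∀ d ∈ D, rk M (D \ {d}) = rk M D

/-- `P` is the circuit partition of `D`: a partition of `D` into nonempty classes such
that the circuits of `M` contained in `D` are exactly the complements (in `D`) of the
classes. -/
def IsCircuitPartition (M : Matroid α) (D : Set α) (P : Set (Set α)) : Prop :=
  (∀ p ∈ P, p.Nonempty) ∧ (∀ p ∈ P, p ⊆ D) ∧ (∀ d ∈ D, ∃! p, p ∈ P ∧ d ∈ p) ∧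
    ∀ C, (IsCircuit M C ∧ C ⊆ D) ↔ ∃ p ∈ P, C = D \ p

/-- A positive double circuit: one whose circuit partition has strictly more singular
(size-one) classes than multiple classes. -/
def PositiveDoubleCircuit (M : Matroid α) (D : Set α) : Prop :=
  DoubleCircuit M D ∧ ∃ P, IsCircuitPartition M D P ∧
    {p ∈ P | p.ncard ≠ 1}.ncard < {p ∈ P | p.ncard = 1}.ncard

/-- A hyperplane (copoint): a maximal proper flat. -/
def IsHyperplane (M : Matroid α) (H : Set α) : Prop :=
  M.IsFlat H ∧ H ≠ M.E ∧ ∀ F, M.IsFlat F → H ⊂ F → F = M.E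

/-- A coline: a flat of codimension two. -/
def IsColine (M : Matroid α) (L : Set α) : Prop :=
  M.IsFlat L ∧ rk M L + 2 = rk M M.E

/-- `P` is the copoint partition of the coline `L`: a partition of `M.E \ L` such that
the hyperplanes containing `L` are exactly the sets `L ∪ p` for classes `p`. -/
def IsCopointPartition (M : Matroid α) (L : Set α) (P : Set (Set α)) : Prop :=
  (∀ p ∈ P, p.Nonempty) ∧ (∀ p ∈ P, p ⊆ M.E \ L) ∧ (∀ d ∈ M.E \ L, ∃! p, p ∈ P ∧ d ∈ p) ∧
    ∀ H, (IsHyperplane M H ∧ L ⊆ H) ↔ ∃ p ∈ P, H = L ∪ p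

/-- A positive coline: one whose copoint partition has strictly more singular (size-one)
classes than multiple classes. -/
def PositiveColine (M : Matroid α) (L : Set α) : Prop :=
  IsColine M L ∧ ∃ P, IsCopointPartition M L P ∧
    {p ∈ P | p.ncard ≠ 1}.ncard < {p ∈ P | p.ncard = 1}.ncard

/-- A simple matroid: no loops and no parallel pairs. -/
def SimpleM (M : Matroid α) : Prop :=
  (∀ e ∈ M.E, M.Indep {e}) ∧ ∀ e f, e ∈ M.E → f ∈ M.E → e ≠ f → M.Indep {e, f}

/-- A coloop: an element contained in every base. -/
def IsColoop (M : Matroid α) (e : α) : Prop :=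
  e ∈ M.E ∧ ∀ B, M.IsBase B → e ∈ B

open Classical in
/-- The permutation of `α` exchanging `e` and `f`. -/
noncomputable def swapMap (e f : α) (x : α) : α :=
  if x = e then f else if x = f then e else x

/-- `e` and `f` are clones in `M` if exchanging them is an automorphism of `M`. -/
def Clones (M : Matroid α) (e f : α) : Prop :=
  e ∈ M.E ∧ f ∈ M.E ∧ ∀ I, M.Indep I ↔ M.Indep (swapMap e f '' I)

/-- Contraction of a set, defined by duality with deletion. -/
noncomputable def contract (M : Matroid α) (C : Set α) : Matroid α := (M✶ ↾ (M.E \ C))✶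

/-- Deletion of a set. -/
noncomputable def delete (M : Matroid α) (D : Set α) : Matroid α := M ↾ (M.E \ D)

/-- `N` is a minor of `M`. -/
def IsMinorOf (N M : Matroid α) : Prop :=
  ∃ C D, C ⊆ M.E ∧ D ⊆ M.E ∧ Disjoint C D ∧ N = Paper.delete (contract M C) D

/-!
Everything is complementation in `M.E`. By the dual rank formula
`r✶(X) = |X| + r(E \ X) - r(E)`, a set `D` is a double circuit of `M` exactly when `E \ D` is a
coline of `M✶`. The hyperplanes of `M✶` are the complements of the circuits of `M`, so the
hyperplanes of `M✶` through `E \ D` are the sets `(E \ D) ∪ p` with `D \ p` a circuit of `M`.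
Hence the circuit partition of `D` is the copoint partition of `E \ D`, class for class.
-/

variable {M N : Matroid α} {X C D F K : Set α}

lemma cast_rk [M.RankFinite] (X : Set α) : (rk M X : ℕ∞) = M.eRk X := by
  obtain ⟨k, hk⟩ := ENat.ne_top_iff_exists.mp (eRk_ne_top_iff.mpr (M.isRkFinite_set X))
  have hset : {n : ℕ | ∃ I, I ⊆ X ∧ M.Indep I ∧ I.ncard = n} = Iic k := by
    ext n
    simp only [mem_ofPred_eq, mem_Iic, ← Nat.cast_le (α := ℕ∞), hk, le_eRk_iff]
    refine exists_congr fun I => and_congr_right fun _ => and_congr_right fun hI => ?_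
    rw [← hI.finite.cast_ncard_eq, Nat.cast_inj]
  rw [rk, hset, csSup_Iic, hk]

lemma rk_mono [M.RankFinite] (h : X ⊆ C) : rk M X ≤ rk M C := by
  exact_mod_cast (cast_rk (M := M) X).trans_le ((M.eRk_mono h).trans (cast_rk C).ge)

lemma rk_le_rk_sdiff_singleton_add_one [M.RankFinite] (X : Set α) (e : α) :
    rk M X ≤ rk M (X \ {e}) + 1 := by
  have h := (M.eRk_mono (insert_sdiff_singleton.symm ▸ subset_insert e X)).trans
    (M.eRk_insert_le_add_one e (X \ {e}))
  rw [← cast_rk, ← cast_rk] at h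
  exact_mod_cast h

lemma rk_dual_add_rk_ground [M.Finite] (hX : X ⊆ M.E) :
    rk M✶ X + rk M M.E = rk M (M.E \ X) + X.ncard := by
  apply Nat.cast_injective (R := ℕ∞)
  push_cast
  rw [cast_rk, cast_rk, cast_rk, eRk_ground, (M.ground_finite.subset hX).cast_ncard_eq]
  exact M.eRk_dual_add_eRank X hX

lemma isFlat_iff_forall_rk_lt_rk_insert [M.RankFinite] (hF : F ⊆ M.E) :
    M.IsFlat F ↔ ∀ e ∈ M.E \ F, rk M F < rk M (insert e F) := by
  have hrk : ∀ e ∈ M.E, e ∈ M.closure F ↔ ¬ rk M F < rk M (insert e F) := by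
    intro e he
    rw [not_lt, ← Nat.cast_le (α := ℕ∞), cast_rk, cast_rk]
    refine ⟨fun hcl => ?_, fun h => by_contra fun hcl => ?_⟩
    · calc M.eRk (insert e F) ≤ M.eRk (M.closure F) :=
            M.eRk_mono (insert_subset hcl (M.subset_closure F))
        _ = M.eRk F := M.eRk_closure_eq F
    · rw [eRk_insert_eq_add_one ⟨he, hcl⟩] at h
      exact (ENat.lt_add_one_iff (M.isRkFinite_set F).eRk_lt_top.ne).2 le_rfl |>.not_ge h
  rw [isFlat_iff_closure_eq, subset_antisymm_iff, and_iff_left (M.subset_closure F)]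
  refine ⟨fun h e he => ?_, fun h e he => ?_⟩
  · exact not_not.1 fun hlt => he.2 (h ((hrk e he.1).2 hlt))
  · exact by_contra fun heF => (hrk e (mem_ground_of_mem_closure he)).1 he
      (h e ⟨mem_ground_of_mem_closure he, heF⟩)

lemma isHyperplane_compl_iff_isCocircuit (hK : K ⊆ N.E) :
    IsHyperplane N (N.E \ K) ↔ N.IsCocircuit K := by
  rw [isCocircuit_iff_minimal_compl_nonspanning', minimal_subset_iff]
  have hcompl : ∀ {X}, X ⊆ N.E → N.E \ (N.E \ X) = X := sdiff_sdiff_cancel_left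
  have hflat_spanning : ∀ {F}, N.IsFlat F → N.Spanning F → F = N.E :=
    fun hF hsp => hF.closure ▸ hsp.closure_eq
  constructor
  · rintro ⟨hflat, hne, hmax⟩
    refine ⟨⟨mt (hflat_spanning hflat) hne, hK⟩, fun K' ⟨hK'ns, hK'⟩ hK'K => ?_⟩
    have hsub : N.E \ K ⊆ N.closure (N.E \ K') :=
      (sdiff_subset_sdiff_right hK'K).trans (N.subset_closure _)
    obtain heq | hlt := hsub.eq_or_ssubset
    · exact hK'K.antisymm' <|
        (sdiff_subset_sdiff_iff_subset hK' hK).1 (heq ▸ N.subset_closure _)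
    · exact absurd ((spanning_iff_closure_eq sdiff_subset).2 (hmax _ (N.isFlat_closure _) hlt))
        hK'ns
  · rintro ⟨⟨hns, -⟩, hmin⟩
    have hflat : N.IsFlat (N.E \ K) := by
      have h := hmin (t := N.E \ N.closure (N.E \ K))
        ⟨by rwa [hcompl (N.closure_subset_ground _), closure_spanning_iff], sdiff_subset⟩
        (sdiff_subset_comm.1 (N.subset_closure _))
      rw [isFlat_iff_closure_eq]
      conv_rhs => rw [h, hcompl (N.closure_subset_ground _)]
    refine ⟨hflat, fun h => hns (by rw [h]; exact N.ground_spanning), fun F hF hlt => ?_⟩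
    by_contra hFE
    have h := hmin (t := N.E \ F)
      ⟨by rw [hcompl hF.subset_ground]; exact mt (hflat_spanning hF) hFE, sdiff_subset⟩
      (sdiff_subset_comm.1 hlt.subset)
    exact hlt.ne (by rw [h, hcompl hF.subset_ground])

lemma isCircuit_iff_isCircuit : IsCircuit M C ↔ M.IsCircuit C :=
  isCircuit_iff_dep_forall_sdiff_singleton_indep.symm

lemma isHyperplane_dual_compl_iff (hC : C ⊆ M.E) :
    IsHyperplane M✶ (M.E \ C) ↔ IsCircuit M C := by
  rw [isCircuit_iff_isCircuit, ← dual_isCocircuit_iff]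
  exact isHyperplane_compl_iff_isCocircuit hC

lemma isFlat_dual_compl_iff [M.Finite] (hD : D ⊆ M.E) :
    M✶.IsFlat (M.E \ D) ↔ ∀ d ∈ D, rk M (D \ {d}) = rk M D := by
  rw [isFlat_iff_forall_rk_lt_rk_insert (show M.E \ D ⊆ M✶.E from sdiff_subset), dual_ground,
    sdiff_sdiff_cancel_left hD]
  refine forall₂_congr fun d hd => ?_
  have hcompl : M.E \ insert d (M.E \ D) = D \ {d} := by
    ext x
    have := @hD x
    simp only [mem_sdiff, mem_insert_iff, mem_singleton_iff]
    tauto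
  -- adding `d` to `E \ D` raises the dual rank by `1 + r(D \ {d}) - r(D)`
  have hins := rk_dual_add_rk_ground (insert_subset (hD hd) (sdiff_subset (s := M.E) (t := D)))
  have h := rk_dual_add_rk_ground (sdiff_subset (s := M.E) (t := D))
  rw [hcompl, ncard_insert_of_notMem (fun h => h.2 hd) (M.ground_finite.subset sdiff_subset)]
    at hins
  rw [sdiff_sdiff_cancel_left hD] at h
  have := rk_mono (M := M) (sdiff_subset (s := D) (t := {d}))
  have := rk_le_rk_sdiff_singleton_add_one (M := M) D d
  omega

lemma isColine_dual_compl_iff [M.Finite] (hD : D ⊆ M.E) :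
    IsColine M✶ (M.E \ D) ↔ DoubleCircuit M D := by
  rw [IsColine, DoubleCircuit, isFlat_dual_compl_iff hD, dual_ground]
  have h := rk_dual_add_rk_ground (sdiff_subset (s := M.E) (t := D))
  have hE := rk_dual_add_rk_ground (subset_refl M.E)
  have hempty : rk M ∅ = 0 := by exact_mod_cast (cast_rk (M := M) ∅).trans M.eRk_empty
  have hcard := ncard_sdiff_add_ncard_of_subset hD M.ground_finite
  rw [sdiff_sdiff_cancel_left hD] at h
  rw [sdiff_self, hempty] at hE
  have hDfin : D.Finite := M.ground_finite.subset hD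
  constructor
  · rintro ⟨hflat, hrk⟩
    exact ⟨hD, hDfin, by omega, hflat⟩
  · rintro ⟨-, -, hrk, hflat⟩
    exact ⟨hflat, by omega⟩

lemma forall_iff_iff_forall_subset_iff {E : Set α} {p q : Set α → Prop}
    (hp : ∀ X, p X → X ⊆ E) (hq : ∀ X, q X → X ⊆ E) :
    (∀ X, p X ↔ q X) ↔ ∀ X ⊆ E, p X ↔ q X :=
  ⟨fun h X _ => h X, fun h X => by
    by_cases hX : X ⊆ E
    exacts [h X hX, iff_of_false (mt (hp X) hX) (mt (hq X) hX)]⟩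

lemma forall_subset_iff_forall_sdiff {E : Set α} {p : Set α → Prop} :
    (∀ X ⊆ E, p X) ↔ ∀ X ⊆ E, p (E \ X) :=
  ⟨fun h _ _ => h _ sdiff_subset, fun h _ hX => sdiff_sdiff_cancel_left hX ▸ h _ sdiff_subset⟩

lemma isCircuitPartition_iff_isCopointPartition_dual (hD : D ⊆ M.E) (P : Set (Set α)) :
    IsCircuitPartition M D P ↔ IsCopointPartition M✶ (M.E \ D) P := by
  have hcompl : M✶.E \ (M.E \ D) = D := sdiff_sdiff_cancel_left hD
  rw [IsCircuitPartition, IsCopointPartition, hcompl]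
  refine and_congr_right fun _ => and_congr_right fun hPD => and_congr_right fun _ => ?_
  rw [forall_iff_iff_forall_subset_iff (E := M.E) (fun _ h => h.2.trans hD)
      (fun _ ⟨_, _, h⟩ => h ▸ sdiff_subset.trans hD),
    forall_iff_iff_forall_subset_iff (E := M.E) (fun _ h => h.1.1.subset_ground)
      (fun _ ⟨p, hp, h⟩ => h ▸ union_subset sdiff_subset ((hPD p hp).trans hD)),
    forall_subset_iff_forall_sdiff (p := fun H => (IsHyperplane M✶ H ∧ M.E \ D ⊆ H) ↔ _)]
  refine forall₂_congr fun C hC => ?_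
  rw [isHyperplane_dual_compl_iff hC, sdiff_subset_sdiff_iff_subset hD hC]
  refine iff_congr Iff.rfl (exists_congr fun p => and_congr_right fun hp => ?_)
  have hpE : M.E \ D ∪ p = M.E \ (D \ p) := by
    rw [sdiff_sdiff_right, inter_eq_right.2 ((hPD p hp).trans hD)]
  rw [hpE]
  exact ⟨fun h => h ▸ rfl, fun h => by
    rw [← sdiff_sdiff_cancel_left hC, h, sdiff_sdiff_cancel_left (sdiff_subset.trans hD)]⟩

lemma positiveDoubleCircuit_iff_positiveColine_dual_compl [M.Finite] (hD : D ⊆ M.E) :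
    PositiveDoubleCircuit M D ↔ PositiveColine M✶ (M.E \ D) := by
  rw [PositiveDoubleCircuit, PositiveColine, isColine_dual_compl_iff hD]
  exact and_congr_right fun _ => exists_congr fun P =>
    and_congr_left' (isCircuitPartition_iff_isCopointPartition_dual hD P)

/-- `M` has a positive double circuit iff `M✶` has a positive coline. -/
theorem positive_double_circuit_iff_dual_positive_coline
    {α : Type*} (M : Matroid α) [M.Finite] :
    (∃ D, PositiveDoubleCircuit M D) ↔ ∃ L, PositiveColine M✶ L := by
  constructor
  · rintro ⟨D, hD⟩
    exact ⟨M.E \ D, (positiveDoubleCircuit_iff_positiveColine_dual_compl hD.1.1).1 hD⟩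
  · rintro ⟨L, hL⟩
    have hLE : L ⊆ M.E := hL.1.1.subset_ground
    refine ⟨M.E \ L, (positiveDoubleCircuit_iff_positiveColine_dual_compl sdiff_subset).2 ?_⟩
    rwa [sdiff_sdiff_cancel_left hLE]

end Paper
end

section
/- Every double circuit in a bicircular matroid has degree at most 6. -/
open Set Matroid

namespace Paper

variable {α : Type*}

universe u
variable {α : Type u}



/-- A multigraph on vertex type `V` with edges labelled by elements of `E ⊆ α`. -/
structure Multigraph (V : Type*) (α : Type*) where
  E : Set α
  ends : α → Sym2 V

/-- The vertices incident with an edge set `D`. -/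
def Multigraph.verts {V : Type*} (G : Multigraph V α) (D : Set α) : Set V :=
  {v | ∃ e ∈ D, v ∈ G.ends e}

/-- The degree of `v` in the subgraph with edge set `D` (loops count twice). -/
noncomputable def Multigraph.deg {V : Type*} (G : Multigraph V α) (D : Set α) (v : V) : ℕ :=
  {e ∈ D | v ∈ G.ends e ∧ ¬ (G.ends e).IsDiag}.ncard +
    2 * {e ∈ D | G.ends e = Sym2.diag v}.ncard

/-- `M` is the bicircular matroid of `G`: an edge set is independent iff every component
of the induced subgraph contains at most one cycle; equivalently, iff every finite
subset `J` is incident with at least `|J|` vertices. -/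
def IsBicircularOf {V : Type*} (G : Multigraph V α) (M : Matroid α) : Prop :=
  M.E = G.E ∧ ∀ I, M.Indep I ↔ I ⊆ G.E ∧ ∀ J ⊆ I, J.Finite → J.ncard ≤ (G.verts J).ncard

/-- `M` is a bicircular matroid. -/
def IsBicircular (M : Matroid α) : Prop :=
  ∃ (V : Type u) (G : Multigraph V α), IsBicircularOf G M

/-- `G` has girth at least five: every nonempty set of at most four edges is incident
with strictly more vertices than it has edges (i.e. contains no cycle). -/
def GirthAtLeastFive {V : Type*} (G : Multigraph V α) : Prop :=
  ∀ J ⊆ G.E, J.Finite → J.Nonempty → J.ncard ≤ 4 → J.ncard < (G.verts J).ncard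

/-!
Let `D` be a double circuit of the bicircular matroid of `G` whose circuit partition has `k ≥ 2`
classes. A bicircular circuit `C` spans exactly `|C| - 1` vertices. Two of the circuits `D \ p`
cover `D` and meet in an independent set, so `D` spans at most `|D| - 2 = r(D)` vertices, hence
exactly that many. The circuit `D \ p` then misses exactly `|p| - 1` of them, different circuits
miss disjoint sets, and the vertices missed by none form a set `U`; summing over the classes gives
`k = |U| + 2`. Every vertex of `D` has degree at least two and every vertex of `U` degree at least
three, so the handshake count `2 (|D| - 2) + |U| ≤ 2 |D|` gives `|U| ≤ 4`.
-/

namespace Multigraph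

variable {V : Type*} (G : Multigraph V α) {X Y : Set α}

lemma verts_mono (h : X ⊆ Y) : G.verts X ⊆ G.verts Y := by
  rintro v ⟨e, he, hv⟩
  exact ⟨e, h he, hv⟩

lemma verts_union (X Y : Set α) : G.verts (X ∪ Y) = G.verts X ∪ G.verts Y := by
  ext v
  simp only [verts, mem_union, mem_ofPred_eq, or_and_right, exists_or]

lemma verts_finite (hX : X.Finite) : (G.verts X).Finite := by
  classical
  have hends : ∀ e : α, {v : V | v ∈ G.ends e}.Finite := fun e =>
    (G.ends e).toFinset.finite_toSet.subset fun v hv => Sym2.mem_toFinset.mpr hv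
  refine (hX.biUnion fun e _ => hends e).subset ?_
  rintro v ⟨e, he, hv⟩
  exact mem_biUnion he hv

lemma two_le_ncard_incident (hX : X.Finite)
    (h : ∀ e ∈ X, (G.verts X).ncard ≤ (G.verts (X \ {e})).ncard) {v : V} (hv : v ∈ G.verts X) :
    2 ≤ {e ∈ X | v ∈ G.ends e}.ncard := by
  obtain ⟨e, he, hve⟩ := hv
  by_contra! hlt
  have hsingle : ∀ f ∈ X, v ∈ G.ends f → f = e := fun f hf hvf =>
    (ncard_le_one (hX.subset (sep_subset X (v ∈ G.ends ·)))).mp (by omega) f ⟨hf, hvf⟩ e ⟨he, hve⟩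
  have hsub : G.verts (X \ {e}) ⊆ G.verts X \ {v} := by
    rintro w ⟨f, ⟨hf, hfe⟩, hw⟩
    exact ⟨⟨f, hf, hw⟩, fun hwv => hfe (hsingle f hf (hwv ▸ hw))⟩
  have hVX := G.verts_finite hX
  have := ncard_le_ncard hsub hVX.sdiff
  have := ncard_sdiff_singleton_add_one (show v ∈ G.verts X from ⟨e, he, hve⟩) hVX
  have := h e he
  omega

open Finset in
lemma sum_ncard_incident_le (W : Finset V) (hX : X.Finite) :
    ∑ v ∈ W, {e ∈ X | v ∈ G.ends e}.ncard ≤ 2 * X.ncard := by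
  classical
  obtain ⟨X, rfl⟩ := hX.exists_finset_coe
  have hinc : ∀ v, {e ∈ (X : Set α) | v ∈ G.ends e}.ncard =
      #(X.bipartiteAbove (fun v e => v ∈ G.ends e) v) := fun v => by
    rw [← ncard_coe_finset, coe_bipartiteAbove]; rfl
  simp_rw [hinc, sum_card_bipartiteAbove_eq_sum_card_bipartiteBelow, ncard_coe_finset]
  have hends : ∀ e, #(W.bipartiteBelow (fun v e => v ∈ G.ends e) e) ≤ 2 := fun e =>
    calc #(W.bipartiteBelow _ e) ≤ #(G.ends e).toFinset :=
          card_le_card fun v hv => Sym2.mem_toFinset.mpr (mem_filter.mp hv).2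
      _ ≤ 2 := by rw [Sym2.card_toFinset]; split_ifs <;> omega
  calc ∑ e ∈ X, #(W.bipartiteBelow _ e) ≤ ∑ _e ∈ X, 2 := sum_le_sum fun e _ => hends e
    _ = 2 * #X := by rw [sum_const, smul_eq_mul, mul_comm]

section Partition

variable (D : Set α) (P : Set (Set α))

def privateVerts (p : Set α) : Set V := G.verts D \ G.verts (D \ p)

def commonVerts : Set V := {v ∈ G.verts D | ∀ p ∈ P, v ∈ G.verts (D \ p)}

lemma verts_eq_commonVerts_union :
    G.verts D = G.commonVerts D P ∪ ⋃ p ∈ P, G.privateVerts D p := by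
  ext v
  simp only [commonVerts, privateVerts, mem_union, mem_sep_iff, mem_iUnion₂, mem_sdiff,
    exists_prop]
  refine ⟨fun hv => ?_, by rintro (⟨hv, -⟩ | ⟨-, -, hv, -⟩) <;> exact hv⟩
  by_cases h : ∀ p ∈ P, v ∈ G.verts (D \ p)
  · exact Or.inl ⟨hv, h⟩
  · obtain ⟨p, hp, hvp⟩ := not_forall₂.mp h
    exact Or.inr ⟨p, hp, hv, hvp⟩

lemma disjoint_commonVerts_privateVerts :
    Disjoint (G.commonVerts D P) (⋃ p ∈ P, G.privateVerts D p) := by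
  refine Set.disjoint_left.mpr fun v hv hv' => ?_
  obtain ⟨p, hp, -, hvp⟩ := mem_iUnion₂.mp hv'
  exact hvp (hv.2 p hp)

variable {D P}

lemma pairwiseDisjoint_privateVerts (hP : P.PairwiseDisjoint id) :
    P.PairwiseDisjoint (G.privateVerts D) := by
  intro p hp q hq hpq
  refine Set.disjoint_left.mpr fun v ⟨⟨e, he, hve⟩, hvp⟩ ⟨_, hvq⟩ => ?_
  have hep : e ∈ p := by_contra fun h => hvp ⟨e, ⟨he, h⟩, hve⟩
  have heq : e ∈ q := by_contra fun h => hvq ⟨e, ⟨he, h⟩, hve⟩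
  exact Set.disjoint_left.mp (hP hp hq hpq) hep heq

end Partition

end Multigraph

namespace IsCircuitPartition

variable {M : Matroid α} {D : Set α} {P : Set (Set α)}

lemma finite (hP : IsCircuitPartition M D P) (hD : D.Finite) : P.Finite :=
  hD.finite_subsets.subset hP.2.1

lemma isCircuit_diff (hP : IsCircuitPartition M D P) {p : Set α} (hp : p ∈ P) :
    IsCircuit M (D \ p) :=
  ((hP.2.2.2 _).mpr ⟨p, hp, rfl⟩).1

lemma pairwiseDisjoint (hP : IsCircuitPartition M D P) : P.PairwiseDisjoint id := by
  intro p hp q hq hpq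
  refine Set.disjoint_left.mpr fun d hdp hdq => hpq ?_
  obtain ⟨r, -, hr⟩ := hP.2.2.1 d (hP.2.1 p hp hdp)
  exact (hr p ⟨hp, hdp⟩).trans (hr q ⟨hq, hdq⟩).symm

lemma biUnion_eq (hP : IsCircuitPartition M D P) : ⋃ p ∈ P, p = D := by
  refine subset_antisymm (iUnion₂_subset hP.2.1) fun d hd => ?_
  obtain ⟨p, ⟨hp, hdp⟩, -⟩ := hP.2.2.1 d hd
  exact mem_biUnion hp hdp

lemma indep_inter_diff (hP : IsCircuitPartition M D P) {p q : Set α} (hp : p ∈ P) (hq : q ∈ P)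
    (hpq : p ≠ q) : M.Indep ((D \ p) ∩ (D \ q)) := by
  obtain ⟨z, hz⟩ := hP.1 q hq
  have hzp : z ∉ p := fun hzp => Set.disjoint_left.mp (hP.pairwiseDisjoint hp hq hpq) hzp hz
  exact ((hP.isCircuit_diff hp).2 z ⟨hP.2.1 q hq hz, hzp⟩).subset
    (subset_sdiff_singleton inter_subset_left fun h => h.2.2 hz)

lemma diff_union_diff (hP : IsCircuitPartition M D P) {p q : Set α} (hp : p ∈ P) (hq : q ∈ P)
    (hpq : p ≠ q) : (D \ p) ∪ (D \ q) = D := by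
  rw [← sdiff_inter, (show Disjoint p q from hP.pairwiseDisjoint hp hq hpq).inter_eq, sdiff_empty]

end IsCircuitPartition

namespace IsBicircularOf

variable {V : Type*} {G : Multigraph V α} {M : Matroid α} {C D I X : Set α} {P : Set (Set α)}

lemma ncard_le_ncard_verts (hG : IsBicircularOf G M) (hI : M.Indep I) (hfin : I.Finite) :
    I.ncard ≤ (G.verts I).ncard :=
  ((hG.2 I).mp hI).2 I Subset.rfl hfin

lemma rk_le_ncard_verts (hG : IsBicircularOf G M) (hX : X.Finite) :
    rk M X ≤ (G.verts X).ncard := by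
  refine csSup_le ⟨0, ∅, empty_subset X, M.empty_indep, ncard_empty α⟩ ?_
  rintro m ⟨I, hIX, hI, rfl⟩
  exact (hG.ncard_le_ncard_verts hI (hX.subset hIX)).trans
    (ncard_le_ncard (G.verts_mono hIX) (G.verts_finite hX))

lemma ncard_verts_add_one (hG : IsBicircularOf G M) (hC : IsCircuit M C) (hfin : C.Finite) :
    (G.verts C).ncard + 1 = C.ncard := by
  obtain ⟨hdep, hmin⟩ := hC
  obtain ⟨x, hx⟩ := hdep.nonempty
  have hle : C.ncard ≤ (G.verts C).ncard + 1 := by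
    have := hG.ncard_le_ncard_verts (hmin x hx) hfin.sdiff
    have := ncard_le_ncard (G.verts_mono (sdiff_subset : C \ {x} ⊆ C)) (G.verts_finite hfin)
    have := ncard_sdiff_singleton_add_one hx hfin
    omega
  have hlt : (G.verts C).ncard < C.ncard := by
    by_contra! hge
    refine hdep.not_indep ((hG.2 C).mpr ⟨hG.1 ▸ hdep.subset_ground, fun J hJ hJfin => ?_⟩)
    obtain rfl | ⟨y, hyC, hyJ⟩ := hJ.eq_or_ssubset.imp_right exists_of_ssubset
    · exact hge
    · exact hG.ncard_le_ncard_verts ((hmin y hyC).subset (subset_sdiff_singleton hJ hyJ)) hJfin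
  omega

lemma two_le_ncard_incident_of_isCircuit (hG : IsBicircularOf G M) (hC : IsCircuit M C)
    (hfin : C.Finite) {v : V} (hv : v ∈ G.verts C) : 2 ≤ {e ∈ C | v ∈ G.ends e}.ncard := by
  refine G.two_le_ncard_incident hfin (fun e he => ?_) hv
  have := hG.ncard_le_ncard_verts (hC.2 e he) hfin.sdiff
  have := ncard_sdiff_singleton_add_one he hfin
  have := hG.ncard_verts_add_one hC hfin
  omega

lemma ncard_verts_union_add_two_le (hG : IsBicircularOf G M) {C₁ C₂ : Set α}
    (hC₁ : IsCircuit M C₁) (hC₂ : IsCircuit M C₂) (hfin₁ : C₁.Finite) (hfin₂ : C₂.Finite)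
    (hI : M.Indep (C₁ ∩ C₂)) : (G.verts (C₁ ∪ C₂)).ncard + 2 ≤ (C₁ ∪ C₂).ncard := by
  have hV₁ := G.verts_finite hfin₁
  have hinter : (C₁ ∩ C₂).ncard ≤ (G.verts C₁ ∩ G.verts C₂).ncard :=
    (hG.ncard_le_ncard_verts hI (hfin₁.subset inter_subset_left)).trans <|
      ncard_le_ncard (subset_inter (G.verts_mono inter_subset_left)
        (G.verts_mono inter_subset_right)) (hV₁.subset inter_subset_left)
  have := ncard_union_add_ncard_inter _ _ hV₁ (G.verts_finite hfin₂)
  have := ncard_union_add_ncard_inter _ _ hfin₁ hfin₂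
  have := hG.ncard_verts_add_one hC₁ hfin₁
  have := hG.ncard_verts_add_one hC₂ hfin₂
  rw [G.verts_union]
  omega

lemma ncard_verts_add_two (hG : IsBicircularOf G M) (hD : DoubleCircuit M D)
    (hP : IsCircuitPartition M D P) (hk : 1 < P.ncard) : (G.verts D).ncard + 2 = D.ncard := by
  obtain ⟨-, hDfin, hrk, -⟩ := hD
  obtain ⟨p, q, hp, hq, hpq⟩ := (one_lt_ncard_iff (hP.finite hDfin)).mp hk
  have hle := hG.ncard_verts_union_add_two_le (hP.isCircuit_diff hp) (hP.isCircuit_diff hq)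
    hDfin.sdiff hDfin.sdiff (hP.indep_inter_diff hp hq hpq)
  rw [hP.diff_union_diff hp hq hpq] at hle
  have := hG.rk_le_ncard_verts hDfin
  omega

lemma two_le_ncard_incident_of_doubleCircuit (hG : IsBicircularOf G M) (hD : DoubleCircuit M D)
    (hV : (G.verts D).ncard + 2 = D.ncard) {v : V} (hv : v ∈ G.verts D) :
    2 ≤ {e ∈ D | v ∈ G.ends e}.ncard := by
  obtain ⟨-, hDfin, hrk, hdel⟩ := hD
  refine G.two_le_ncard_incident hDfin (fun e he => ?_) hv
  have := hG.rk_le_ncard_verts (hDfin.subset (sdiff_subset : D \ {e} ⊆ D))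
  have := hdel e he
  omega

lemma ncard_privateVerts_add_one (hG : IsBicircularOf G M) (hD : D.Finite)
    (hP : IsCircuitPartition M D P) (hV : (G.verts D).ncard + 2 = D.ncard) {p : Set α}
    (hp : p ∈ P) : (G.privateVerts D p).ncard + 1 = p.ncard := by
  have := hG.ncard_verts_add_one (hP.isCircuit_diff hp) hD.sdiff
  have := ncard_sdiff_add_ncard_of_subset (hP.2.1 p hp) hD
  have := ncard_sdiff_add_ncard_of_subset (G.verts_mono (sdiff_subset : D \ p ⊆ D))
    (G.verts_finite hD)
  rw [Multigraph.privateVerts]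
  omega

lemma ncard_commonVerts_add_two (hG : IsBicircularOf G M) (hD : D.Finite)
    (hP : IsCircuitPartition M D P) (hV : (G.verts D).ncard + 2 = D.ncard) :
    (G.commonVerts D P).ncard + 2 = P.ncard := by
  have hPfin := hP.finite hD
  have hVfin := G.verts_finite hD
  have hsplit : (G.verts D).ncard =
      (G.commonVerts D P).ncard + ∑ᶠ p ∈ P, (G.privateVerts D p).ncard := by
    rw [← hPfin.ncard_biUnion (s := G.privateVerts D) (fun _ _ => hVfin.sdiff)
      (G.pairwiseDisjoint_privateVerts hP.pairwiseDisjoint),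
      ← ncard_union_eq (G.disjoint_commonVerts_privateVerts D P) (hVfin.subset (sep_subset _ _))
        (hPfin.biUnion fun _ _ => hVfin.sdiff), ← G.verts_eq_commonVerts_union]
  have hsum : ∑ᶠ p ∈ P, (G.privateVerts D p).ncard + P.ncard = D.ncard := by
    rw [← finsum_one, ← finsum_mem_add_distrib hPfin,
      finsum_mem_congr rfl fun p hp => hG.ncard_privateVerts_add_one hD hP hV hp,
      ← hPfin.ncard_biUnion (fun p hp => hD.subset (hP.2.1 p hp)) hP.pairwiseDisjoint]
    exact congrArg ncard hP.biUnion_eq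
  omega

lemma three_le_ncard_incident_of_mem_commonVerts (hG : IsBicircularOf G M) (hD : D.Finite)
    (hP : IsCircuitPartition M D P) {v : V} (hv : v ∈ G.commonVerts D P) :
    3 ≤ {e ∈ D | v ∈ G.ends e}.ncard := by
  obtain ⟨⟨e, he, hve⟩, hcommon⟩ := hv
  obtain ⟨p, ⟨hp, hep⟩, -⟩ := hP.2.2.1 e he
  have := hG.two_le_ncard_incident_of_isCircuit (hP.isCircuit_diff hp) hD.sdiff (hcommon p hp)
  have hsub : insert e {f ∈ D \ p | v ∈ G.ends f} ⊆ {f ∈ D | v ∈ G.ends f} :=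
    insert_subset ⟨he, hve⟩ fun f hf => ⟨hf.1.1, hf.2⟩
  have hle := ncard_le_ncard hsub (hD.subset (sep_subset _ _))
  rw [ncard_insert_of_notMem (fun h => h.1.2 hep) (hD.sdiff.subset (sep_subset _ _))] at hle
  omega

open Finset in
lemma ncard_commonVerts_le_four (hG : IsBicircularOf G M) (hD : DoubleCircuit M D)
    (hP : IsCircuitPartition M D P) (hV : (G.verts D).ncard + 2 = D.ncard) :
    (G.commonVerts D P).ncard ≤ 4 := by
  classical
  have hDfin := hD.2.1
  have hVfin := G.verts_finite hDfin
  have hdeg : ∀ v ∈ hVfin.toFinset,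
      2 + (if v ∈ G.commonVerts D P then 1 else 0) ≤ {e ∈ D | v ∈ G.ends e}.ncard := by
    intro v hv
    split_ifs with hU
    · exact hG.three_le_ncard_incident_of_mem_commonVerts hDfin hP hU
    · exact hG.two_le_ncard_incident_of_doubleCircuit hD hV (hVfin.mem_toFinset.mp hv)
  have hcommon : #{v ∈ hVfin.toFinset | v ∈ G.commonVerts D P} = (G.commonVerts D P).ncard := by
    rw [← ncard_coe_finset]
    congr 1
    ext v
    simp only [coe_filter, Finite.mem_toFinset, mem_ofPred_eq]
    exact ⟨fun h => h.2, fun h => ⟨h.1, h⟩⟩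
  have hcount := (sum_le_sum hdeg).trans (G.sum_ncard_incident_le hVfin.toFinset hDfin)
  rw [sum_add_distrib, sum_const, smul_eq_mul, sum_boole, ← ncard_eq_toFinset_card _ hVfin,
    Nat.cast_id, hcommon] at hcount
  omega

end IsBicircularOf

/-- every double circuit in a bicircular matroid has degree at most `6`. -/
theorem bicircular_double_circuit_degree_le_six {α : Type u} (M : Matroid α)
    (hM : IsBicircular M) (D : Set α) (P : Set (Set α))
    (hD : DoubleCircuit M D) (hP : IsCircuitPartition M D P) :
    P.ncard ≤ 6 := by
  obtain ⟨V, G, hG⟩ := hM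
  rcases le_or_gt P.ncard 1 with hk | hk
  · omega
  have hV := hG.ncard_verts_add_two hD hP hk
  have := hG.ncard_commonVerts_add_two hD.2.1 hP hV
  have := hG.ncard_commonVerts_le_four hD hP hV
  omega

end Paper
end

section
/- Let G be a multigraph and D a double circuit of the bicircular matroid B(G). If P is a path in G[D] all of whose internal vertices have degree 2 in G[D], then the edge set of P is contained in a single class of the circuit partition of D (i.e., every circuit of B(G) contained in D that contains one edge of P contains all edges of P). -/
open Set Matroid

namespace Paper

variable {α : Type*}

universe u
variable {α : Type u}



/-! At an internal vertex `w` of the path, the two path edges meeting there are the only edges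
of `D` at `w`. A circuit of a bicircular matroid has no pendant edge: removing it from a set
with more edges than vertices loses an edge and its private vertex, so the excess survives and
the rest of the circuit would already be dependent. Hence a circuit inside `D` containing one of
two consecutive path edges contains the other, and walking along the path, all of them. -/

theorem Fin.iff_zero_of_forall_castSucc_iff_succ {m : ℕ} {p : Fin (m + 1) → Prop}
    (h : ∀ i : Fin m, p i.castSucc ↔ p i.succ) (i : Fin (m + 1)) : p i ↔ p 0 :=
  Fin.induction Iff.rfl (fun i hi => (h i).symm.trans hi) i

namespace Multigraph

variable {V : Type*} (G : Multigraph V α)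

theorem verts_finite_s6 {J : Set α} (hJ : J.Finite) : (G.verts J).Finite := by
  classical
  exact (hJ.biUnion fun x _ => (G.ends x).toFinset.finite_toSet).subset
    fun _ ⟨_, hx, hw⟩ => mem_biUnion hx (Sym2.mem_toFinset.2 hw)

theorem verts_mono_s6 {J K : Set α} (h : J ⊆ K) : G.verts J ⊆ G.verts K :=
  fun _ ⟨x, hx, hw⟩ => ⟨x, h hx, hw⟩

variable {G}

theorem eq_or_eq_of_deg_eq_two {D : Set α} {w : V} {a b x : α} (hD : D.Finite)
    (hw : G.deg D w = 2) (ha : a ∈ D) (hb : b ∈ D) (hab : a ≠ b)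
    (hwa : w ∈ G.ends a) (hwb : w ∈ G.ends b)
    (hna : ¬ (G.ends a).IsDiag) (hnb : ¬ (G.ends b).IsDiag)
    (hx : x ∈ D) (hwx : w ∈ G.ends x) : x = a ∨ x = b := by
  set links := {y ∈ D | w ∈ G.ends y ∧ ¬ (G.ends y).IsDiag}
  set loops := {y ∈ D | G.ends y = Sym2.diag w}
  have hab_links : ({a, b} : Set α) ⊆ links := by
    rintro y (rfl | rfl)
    exacts [⟨ha, hwa, hna⟩, ⟨hb, hwb, hnb⟩]
  have hlinks_fin : links.Finite := hD.subset (sep_subset _ _)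
  have h2 : 2 ≤ links.ncard := ncard_pair hab ▸ ncard_le_ncard hab_links hlinks_fin
  have hdeg : links.ncard + 2 * loops.ncard = 2 := hw
  have hcard : links.ncard = 2 ∧ loops.ncard = 0 := by omega
  by_cases hdiag : (G.ends x).IsDiag
  · have hu := Sym2.diag_diagElem hdiag
    rw [← hu, Sym2.diag, Sym2.mem_iff, or_self] at hwx
    have hx_loop : x ∈ loops := ⟨hx, by rw [← hu, hwx]⟩
    exact (((ncard_pos (hD.subset (sep_subset _ _))).2 ⟨x, hx_loop⟩).ne' hcard.2).elim
  · have hlinks : links = {a, b} :=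
      (eq_of_subset_of_ncard_le hab_links (by rw [hcard.1, ncard_pair hab]) hlinks_fin).symm
    have : x ∈ links := ⟨hx, hwx, hdiag⟩
    rwa [hlinks] at this

end Multigraph

theorem IsCircuitPartition.exists_subset_of_forall_isCircuit {M : Matroid α} {D S : Set α}
    {P : Set (Set α)}
    (hP : IsCircuitPartition M D P) (hSD : S ⊆ D) (hS : S.Nonempty)
    (h : ∀ C, IsCircuit M C → C ⊆ D → ∀ x ∈ S, ∀ y ∈ S, x ∈ C → y ∈ C) : ∃ p ∈ P, S ⊆ p := by
  obtain ⟨x, hx⟩ := hS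
  obtain ⟨p, ⟨hpP, hxp⟩, -⟩ := hP.2.2.1 x (hSD hx)
  refine ⟨p, hpP, fun y hy => ?_⟩
  by_contra hyp
  obtain ⟨hC, hCD⟩ := (hP.2.2.2 (D \ p)).2 ⟨p, hpP, rfl⟩
  exact (h _ hC hCD y hy x hx ⟨hSD hy, hyp⟩).2 hxp

section Bicircular

variable {V : Type*} {G : Multigraph V α} {M : Matroid α}

theorem IsBicircularOf.exists_ne_mem_ends_of_isCircuit (hGM : IsBicircularOf G M) {C : Set α}
    (hC : IsCircuit M C) {c : α} (hc : c ∈ C) {w : V} (hw : w ∈ G.ends c) :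
    ∃ x ∈ C, x ≠ c ∧ w ∈ G.ends x := by
  by_contra! hpendant
  have hCG : C ⊆ G.E := hGM.1 ▸ hC.1.subset_ground
  obtain ⟨J, hJC, hJfin, hJcard⟩ : ∃ J ⊆ C, J.Finite ∧ (G.verts J).ncard < J.ncard := by
    simpa [hGM.2, hCG] using hC.1.not_indep
  have hrest := ((hGM.2 _).1 (hC.2 c hc)).2
  by_cases hcJ : c ∈ J
  · have hw_lost : G.verts (J \ {c}) ⊂ G.verts J :=
      ssubset_of_subset_of_ne (G.verts_mono_s6 sdiff_subset) fun h => by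
        obtain ⟨x, hx, hwx⟩ : w ∈ G.verts (J \ {c}) := h ▸ ⟨c, hcJ, hw⟩
        exact hpendant x (hJC hx.1) hx.2 hwx
    have := ncard_lt_ncard hw_lost (G.verts_finite_s6 hJfin)
    have := hrest _ (sdiff_subset_sdiff_left hJC) hJfin.sdiff
    rw [ncard_sdiff_singleton_of_mem hcJ] at this
    omega
  · have := hrest J (subset_sdiff_singleton hJC hcJ) hJfin
    omega

theorem IsBicircularOf.mem_iff_mem_of_isCircuit (hGM : IsBicircularOf G M) {C D : Set α}
    (hC : IsCircuit M C) (hCD : C ⊆ D) {w : V} {a b : α}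
    (hwa : w ∈ G.ends a) (hwb : w ∈ G.ends b)
    (honly : ∀ x ∈ D, w ∈ G.ends x → x = a ∨ x = b) : a ∈ C ↔ b ∈ C := by
  constructor
  · intro ha
    obtain ⟨x, hx, hxa, hwx⟩ := hGM.exists_ne_mem_ends_of_isCircuit hC ha hwa
    rcases honly x (hCD hx) hwx with rfl | rfl
    exacts [absurd rfl hxa, hx]
  · intro hb
    obtain ⟨x, hx, hxb, hwx⟩ := hGM.exists_ne_mem_ends_of_isCircuit hC hb hwb
    rcases honly x (hCD hx) hwx with rfl | rfl
    exacts [hx, absurd rfl hxb]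

theorem IsBicircularOf.mem_iff_mem_succ_of_isCircuit (hGM : IsBicircularOf G M) {C D : Set α}
    (hD : D.Finite) (hC : IsCircuit M C) (hCD : C ⊆ D) {m : ℕ}
    {v : Fin (m + 1 + 1) → V} {e : Fin (m + 1) → α} (hv : Function.Injective v)
    (he : Function.Injective e) (heD : ∀ i, e i ∈ D)
    (hends : ∀ i : Fin (m + 1), G.ends (e i) = s(v i.castSucc, v i.succ)) (i : Fin m)
    (hw : G.deg D (v i.succ.castSucc) = 2) : e i.castSucc ∈ C ↔ e i.succ ∈ C := by
  have hlink : ∀ j, ¬ (G.ends (e j)).IsDiag := fun j => by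
    rw [hends, Sym2.mk_isDiag_iff]
    exact hv.ne Fin.castSucc_lt_succ.ne
  have hwa : v i.succ.castSucc ∈ G.ends (e i.castSucc) := by
    rw [hends, ← Fin.succ_castSucc]
    exact Sym2.mem_mk_right _ _
  have hwb : v i.succ.castSucc ∈ G.ends (e i.succ) := by
    rw [hends]
    exact Sym2.mem_mk_left _ _
  exact hGM.mem_iff_mem_of_isCircuit hC hCD hwa hwb fun _ hx hwx =>
    Multigraph.eq_or_eq_of_deg_eq_two hD hw (heD _) (heD _) (he.ne Fin.castSucc_lt_succ.ne)
      hwa hwb (hlink _) (hlink _) hx hwx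

end Bicircular

/-- the edge set of a path in `G[D]` whose internal vertices all have
degree `2` in `G[D]` is contained in a single class of the circuit partition of the
double circuit `D`; equivalently, every circuit of `B(G)` contained in `D` containing
one edge of the path contains all of them. -/
theorem path_edges_in_one_circuit_class {α : Type u} {V : Type*}
    (G : Multigraph V α) (M : Matroid α) (hGM : IsBicircularOf G M)
    (D : Set α) (hD : DoubleCircuit M D)
    (n : ℕ) (hn : 0 < n) (v : Fin (n + 1) → V) (e : Fin n → α)
    (hv : Function.Injective v) (he : Function.Injective e)
    (heD : ∀ i, e i ∈ D)
    (hends : ∀ i : Fin n, G.ends (e i) = s(v i.castSucc, v i.succ))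
    (hint : ∀ j : Fin (n + 1), j ≠ 0 → j ≠ Fin.last n → G.deg D (v j) = 2) :
    (∀ C, IsCircuit M C → C ⊆ D → (∃ i, e i ∈ C) → ∀ i, e i ∈ C) ∧
      ∀ P, IsCircuitPartition M D P → ∃ p ∈ P, Set.range e ⊆ p := by
  obtain ⟨m, rfl⟩ := Nat.exists_eq_add_one.2 hn
  have hpath : ∀ C, IsCircuit M C → C ⊆ D → ∀ i, e i ∈ C ↔ e 0 ∈ C := fun C hC hCD =>
    Fin.iff_zero_of_forall_castSucc_iff_succ fun i =>
      hGM.mem_iff_mem_succ_of_isCircuit hD.2.1 hC hCD hv he heD hends i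
        (hint _ (Fin.castSucc_ne_zero_iff.2 (Fin.succ_ne_zero i)) (Fin.castSucc_ne_last _))
  have hclass : ∀ C, IsCircuit M C → C ⊆ D → ∀ i j, e i ∈ C → e j ∈ C :=
    fun C hC hCD i j hi => (hpath C hC hCD j).2 ((hpath C hC hCD i).1 hi)
  refine ⟨fun C hC hCD ⟨i, hi⟩ j => hclass C hC hCD i j hi, fun P hP => ?_⟩
  refine hP.exists_subset_of_forall_isCircuit (range_subset_iff.2 heD) (range_nonempty e) ?_
  rintro C hC hCD _ ⟨i, rfl⟩ _ ⟨j, rfl⟩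
  exact hclass C hC hCD i j

end Paper
end

section
/- For any matroid M, there exists a coline L of M whose copoint partition has at least two singular classes if and only if there exist two hyperplanes H_1 and H_2 of M with |H_1 △ H_2| = 2. -/
open Set Matroid

namespace Paper

variable {α : Type*}

/-!
Two singular classes `{a}`, `{b}` of a coline `L` give hyperplanes `L ∪ {a}` and `L ∪ {b}`
differing exactly in `a` and `b`. Conversely, distinct hyperplanes are incomparable, so
`|H₁ △ H₂| = 2` forces `H₁ \ H₂ = {a}` and `H₂ \ H₁ = {b}`; then `L = H₁ ∩ H₂` is a flat whose
rank is one less than that of the hyperplane `insert a L`, i.e. a coline, and `{a}`, `{b}` are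
classes of its copoint partition, which consists of the sets `H \ L` for hyperplanes `H ⊇ L`
(each `e ∉ L` lies in exactly one of them, namely `cl(L ∪ {e})`).
-/

section SetLemmas

variable {β : Type*} {A B L : Set β} {a b : β}

lemma exists_sdiff_eq_singleton_of_ncard_symmDiff_eq_two (hAB : ¬ A ⊆ B) (hBA : ¬ B ⊆ A)
    (hfin : (symmDiff A B).Finite) (h : (symmDiff A B).ncard = 2) :
    ∃ a b, A \ B = {a} ∧ B \ A = {b} := by
  rw [Set.symmDiff_def] at hfin h
  rw [ncard_union_eq disjoint_sdiff_sdiff (hfin.subset subset_union_left)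
    (hfin.subset subset_union_right)] at h
  have hA := (ncard_pos (hfin.subset subset_union_left)).2 (sdiff_nonempty.2 hAB)
  have hB := (ncard_pos (hfin.subset subset_union_right)).2 (sdiff_nonempty.2 hBA)
  obtain ⟨a, ha⟩ := ncard_eq_one.1 (show (A \ B).ncard = 1 by omega)
  obtain ⟨b, hb⟩ := ncard_eq_one.1 (show (B \ A).ncard = 1 by omega)
  exact ⟨a, b, ha, hb⟩

lemma ncard_symmDiff_union_singleton (ha : a ∉ L) (hb : b ∉ L) (hab : a ≠ b) :
    (symmDiff (L ∪ {a}) (L ∪ {b})).ncard = 2 := by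
  have : symmDiff (L ∪ {a}) (L ∪ {b}) = {a, b} := by
    ext x
    simp only [mem_symmDiff, mem_union, mem_singleton_iff, mem_insert_iff]
    grind
  rw [this, ncard_pair hab]

lemma two_le_ncard_singletons_iff {P : Set (Set β)} (hP : P.Finite) :
    2 ≤ {p ∈ P | p.ncard = 1}.ncard ↔ ∃ a b, a ≠ b ∧ {a} ∈ P ∧ {b} ∈ P := by
  rw [show 2 ≤ _ ↔ 1 < _ from Iff.rfl, one_lt_ncard (hP.subset (sep_subset P _))]
  constructor
  · rintro ⟨p, ⟨hp, hp1⟩, q, ⟨hq, hq1⟩, hpq⟩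
    obtain ⟨a, rfl⟩ := ncard_eq_one.1 hp1
    obtain ⟨b, rfl⟩ := ncard_eq_one.1 hq1
    exact ⟨a, b, fun h => hpq (h ▸ rfl), hp, hq⟩
  · rintro ⟨a, b, hab, ha, hb⟩
    exact ⟨{a}, ⟨ha, ncard_singleton a⟩, {b}, ⟨hb, ncard_singleton b⟩, by simpa⟩

end SetLemmas

variable {M : Matroid α} {F F' H H' L X Y : Set α} {e : α}

lemma _root_.Matroid.IsFlat.inter (hF : M.IsFlat F) (hF' : M.IsFlat F') : M.IsFlat (F ∩ F') := by
  rw [inter_eq_iInter]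
  exact IsFlat.iInter (Bool.forall_bool.2 ⟨hF', hF⟩)

lemma IsHyperplane.eq_of_subset (hH : IsHyperplane M H) (hH' : IsHyperplane M H') (h : H ⊆ H') :
    H = H' :=
  by_contra fun hne => hH'.2.1 (hH.2.2 H' hH'.1 (h.ssubset_of_ne hne))

section RankFinite

variable [M.RankFinite]

-- `rk` is an `sSup` in `ℕ`, so it is only meaningful when the rank is finite.
lemma cast_rk_eq_eRk : (rk M X : ℕ∞) = M.eRk X := by
  obtain ⟨I, hI⟩ := M.exists_isBasis' X
  have hIfin : I.Finite := hI.indep.finite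
  suffices rk M X = I.ncard by rw [this, hIfin.cast_ncard_eq, hI.encard_eq_eRk]
  refine IsGreatest.csSup_eq ⟨⟨I, hI.subset, hI.indep, rfl⟩, ?_⟩
  rintro _ ⟨J, hJX, hJ, rfl⟩
  have hJI := hJ.encard_le_eRk_of_subset hJX
  rw [← hI.encard_eq_eRk, ← hJ.finite.cast_ncard_eq, ← hIfin.cast_ncard_eq] at hJI
  exact_mod_cast hJI

lemma rk_mono_s10 (hXY : X ⊆ Y) : rk M X ≤ rk M Y := by
  have := M.eRk_mono hXY
  rwa [← cast_rk_eq_eRk, ← cast_rk_eq_eRk, Nat.cast_le] at this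

lemma rk_closure_eq : rk M (M.closure X) = rk M X := by
  have := M.eRk_closure_eq X
  rwa [← cast_rk_eq_eRk, ← cast_rk_eq_eRk, Nat.cast_inj] at this

lemma rk_insert_eq_add_one (he : e ∈ M.E \ M.closure X) : rk M (insert e X) = rk M X + 1 := by
  have := eRk_insert_eq_add_one he
  rwa [← cast_rk_eq_eRk, ← cast_rk_eq_eRk, ← Nat.cast_one, ← Nat.cast_add, Nat.cast_inj] at this

lemma _root_.Matroid.IsFlat.rk_lt_of_ssubset (hF : M.IsFlat F) (hFF' : F ⊂ F') (hF' : F' ⊆ M.E) :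
    rk M F < rk M F' := by
  obtain ⟨e, heF', heF⟩ := exists_of_ssubset hFF'
  calc rk M F < rk M (insert e F) := by
        rw [rk_insert_eq_add_one ⟨hF' heF', by rwa [hF.closure]⟩]; omega
    _ ≤ rk M F' := rk_mono_s10 (insert_subset heF' hFF'.subset)

lemma _root_.Matroid.IsFlat.eq_ground_of_rk_le (hF : M.IsFlat F) (h : rk M M.E ≤ rk M F) :
    F = M.E := by
  have hsp : M.Spanning F := by
    rw [spanning_iff_eRk_le hF.subset_ground, ← eRk_ground, ← cast_rk_eq_eRk, ← cast_rk_eq_eRk]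
    exact_mod_cast h
  rw [← hF.closure, hsp.closure_eq]

lemma isHyperplane_iff_rk : IsHyperplane M H ↔ M.IsFlat H ∧ rk M H + 1 = rk M M.E := by
  constructor
  · rintro ⟨hH, hne, hmax⟩
    obtain ⟨e, he, heH⟩ := exists_of_ssubset (hH.subset_ground.ssubset_of_ne hne)
    have hcl : M.closure (insert e H) = M.E := by
      refine hmax _ (M.isFlat_closure _) ((ssubset_insert heH).trans_subset (M.subset_closure _ ?_))
      exact insert_subset he hH.subset_ground
    refine ⟨hH, ?_⟩
    rw [← hcl, rk_closure_eq, rk_insert_eq_add_one ⟨he, by rwa [hH.closure]⟩]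
  · rintro ⟨hH, hrk⟩
    refine ⟨hH, fun h => by rw [h] at hrk; omega, fun F' hF' hHF' => ?_⟩
    exact hF'.eq_ground_of_rk_le (by
      have := hH.rk_lt_of_ssubset hHF' hF'.subset_ground; omega)

lemma isColine_of_isHyperplane_insert (hL : M.IsFlat L) (he : e ∉ L)
    (hH : IsHyperplane M (insert e L)) : IsColine M L := by
  have heE : e ∈ M.E := hH.1.subset_ground (mem_insert e L)
  have hrk := (isHyperplane_iff_rk.1 hH).2
  rw [rk_insert_eq_add_one ⟨heE, by rwa [hL.closure]⟩] at hrk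
  exact ⟨hL, by omega⟩

lemma IsColine.isHyperplane_closure_insert (hL : IsColine M L) (he : e ∈ M.E \ L) :
    IsHyperplane M (M.closure (insert e L)) := by
  refine isHyperplane_iff_rk.2 ⟨M.isFlat_closure _, ?_⟩
  rw [rk_closure_eq, rk_insert_eq_add_one ⟨he.1, by rw [hL.1.closure]; exact he.2⟩, ← hL.2]

lemma IsColine.existsUnique_isHyperplane (hL : IsColine M L) (he : e ∈ M.E \ L) :
    ∃! H, (IsHyperplane M H ∧ L ⊆ H) ∧ e ∈ H := by
  have hsub : insert e L ⊆ M.E := insert_subset he.1 hL.1.subset_ground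
  refine ⟨M.closure (insert e L), ⟨⟨hL.isHyperplane_closure_insert he,
    (subset_insert e L).trans (M.subset_closure _ hsub)⟩, M.subset_closure _ hsub (mem_insert e L)⟩,
    fun H ⟨⟨hH, hLH⟩, heH⟩ => ?_⟩
  refine ((hL.isHyperplane_closure_insert he).eq_of_subset hH ?_).symm
  rw [← hH.1.closure]
  exact M.closure_subset_closure (insert_subset heH hLH)

end RankFinite

def copointClasses (M : Matroid α) (L : Set α) : Set (Set α) :=
  (· \ L) '' {H | IsHyperplane M H ∧ L ⊆ H}

lemma IsColine.isCopointPartition_copointClasses [M.RankFinite] (hL : IsColine M L) :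
    IsCopointPartition M L (copointClasses M L) := by
  refine ⟨?_, ?_, fun e he => ?_, fun H => ⟨fun hH => ⟨H \ L, ⟨H, hH, rfl⟩, ?_⟩, ?_⟩⟩
  · rintro _ ⟨H, ⟨hH, hLH⟩, rfl⟩
    refine sdiff_nonempty.2 fun hHL => ?_
    have hrk := (isHyperplane_iff_rk.1 hH).2
    rw [hHL.antisymm hLH, ← hL.2] at hrk
    omega
  · rintro _ ⟨H, ⟨hH, -⟩, rfl⟩
    exact sdiff_subset_sdiff_left hH.1.subset_ground
  · obtain ⟨H, ⟨hH, heH⟩, huniq⟩ := hL.existsUnique_isHyperplane he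
    refine ⟨H \ L, ⟨⟨H, hH, rfl⟩, heH, he.2⟩, ?_⟩
    rintro _ ⟨⟨H', hH', rfl⟩, heH', -⟩
    rw [huniq H' ⟨hH', heH'⟩]
  · exact (union_sdiff_cancel hH.2).symm
  · rintro ⟨_, ⟨H', hH', rfl⟩, rfl⟩
    rwa [union_sdiff_cancel hH'.2]

lemma IsCopointPartition.finite [M.Finite] {P : Set (Set α)} (hP : IsCopointPartition M L P) :
    P.Finite :=
  M.ground_finite.finite_subsets.subset fun p hp => (hP.2.1 p hp).trans sdiff_subset

lemma IsHyperplane.exists_sdiff_eq_singleton [M.Finite] (hH : IsHyperplane M H)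
    (hH' : IsHyperplane M H') (h : (symmDiff H H').ncard = 2) :
    ∃ a b, H \ H' = {a} ∧ H' \ H = {b} := by
  have hne : H ≠ H' := by rintro rfl; simp at h
  refine exists_sdiff_eq_singleton_of_ncard_symmDiff_eq_two
    (fun h => hne (hH.eq_of_subset hH' h)) (fun h => hne (hH'.eq_of_subset hH h).symm) ?_ h
  exact (M.ground_finite.subset (union_subset hH.1.subset_ground hH'.1.subset_ground)).subset
    symmDiff_subset_union

lemma IsHyperplane.isColine_inter [M.RankFinite] {a : α} (hH : IsHyperplane M H)
    (hH' : IsHyperplane M H') (ha : H \ H' = {a}) : IsColine M (H ∩ H') := by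
  have haH' : a ∉ H ∩ H' := fun h => (ha.symm.subset rfl).2 h.2
  refine isColine_of_isHyperplane_insert (hH.1.inter hH'.1) haH' ?_
  rwa [← union_singleton, ← ha, inter_union_sdiff]

/-- `M` has a coline whose copoint partition has at least two singular
classes iff it has two hyperplanes whose symmetric difference has exactly two
elements. -/
theorem coline_two_singular_iff_hyperplanes_symmdiff_two
    {α : Type*} (M : Matroid α) [M.Finite] :
    (∃ L P, IsColine M L ∧ IsCopointPartition M L P ∧
        2 ≤ {p ∈ P | p.ncard = 1}.ncard) ↔
      ∃ H₁ H₂, IsHyperplane M H₁ ∧ IsHyperplane M H₂ ∧ (symmDiff H₁ H₂).ncard = 2 := by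
  constructor
  · rintro ⟨L, P, -, hP, hcard⟩
    obtain ⟨a, b, hab, ha, hb⟩ := (two_le_ncard_singletons_iff hP.finite).1 hcard
    have hH {p} (hp : p ∈ P) : IsHyperplane M (L ∪ p) := ((hP.2.2.2 _).2 ⟨p, hp, rfl⟩).1
    exact ⟨L ∪ {a}, L ∪ {b}, hH ha, hH hb,
      ncard_symmDiff_union_singleton (hP.2.1 _ ha rfl).2 (hP.2.1 _ hb rfl).2 hab⟩
  · rintro ⟨H₁, H₂, hH₁, hH₂, hcard⟩
    obtain ⟨a, b, ha, hb⟩ := hH₁.exists_sdiff_eq_singleton hH₂ hcard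
    have hL := hH₁.isColine_inter hH₂ ha
    have hP := hL.isCopointPartition_copointClasses
    refine ⟨_, _, hL, hP, (two_le_ncard_singletons_iff hP.finite).2 ⟨a, b, ?_, ?_, ?_⟩⟩
    · rintro rfl
      exact (ha.symm.subset rfl).2 (hb.symm.subset rfl).1
    · rw [← ha, ← sdiff_self_inter]
      exact ⟨H₁, ⟨hH₁, inter_subset_left⟩, rfl⟩
    · rw [← hb, ← sdiff_inter_self_eq_sdiff]
      exact ⟨H₂, ⟨hH₂, inter_subset_right⟩, rfl⟩

end Paper
end

section
/- The graphic matroid M(K_4) contains no pair of clones. -/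
open Set Matroid

namespace Paper

variable {α : Type*}

/-- `N` is (isomorphic to) the cycle matroid of `K₄`: the ground set is in bijection
with the edges of `K₄`, and a set is independent iff it induces a forest (every
nonempty subset has more vertices than edges). -/
def IsMK4 {β : Type*} (N : Matroid β) : Prop :=
  ∃ g : β → Sym2 (Fin 4),
    Set.BijOn g N.E {p : Sym2 (Fin 4) | ¬ p.IsDiag} ∧
      ∀ I ⊆ N.E, (N.Indep I ↔
        ∀ J ⊆ I, J.Nonempty → J.ncard < {v : Fin 4 | ∃ e ∈ J, v ∈ g e}.ncard)

/-! For distinct edges `p`, `q` of `K₄`, write `q = uv` and pick the vertex `w` with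
`p ∉ {uw, vw}`. Then `{q, uw, vw}` is a triangle while `{p, uw, vw}` is a spanning tree, so
exchanging the elements over `p` and `q` would map an independent set onto a circuit. -/

section Forest

variable {V : Type*}

def IsForest (S : Set (Sym2 V)) : Prop :=
  ∀ K ⊆ S, K.Nonempty → K.ncard < {v | ∃ p ∈ K, v ∈ p}.ncard

theorem isForest_image_iff {β : Type*} {g : β → Sym2 V} {I : Set β} (hg : InjOn g I) :
    IsForest (g '' I) ↔ ∀ J ⊆ I, J.Nonempty → J.ncard < {v | ∃ e ∈ J, v ∈ g e}.ncard := by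
  rw [IsForest, forall_subset_image_iff]
  refine forall₂_congr fun J hJ => ?_
  rw [image_nonempty, (hg.mono hJ).ncard_image]
  simp only [mem_image, exists_exists_and_eq_and]

theorem isForest_coe_iff [DecidableEq V] (S : Finset (Sym2 V)) :
    IsForest (S : Set (Sym2 V)) ↔
      ∀ K ⊆ S, K.Nonempty → K.card < (K.biUnion Sym2.toFinset).card := by
  have verts (K : Finset (Sym2 V)) :
      {v | ∃ p ∈ (K : Set (Sym2 V)), v ∈ p} = ↑(K.biUnion Sym2.toFinset) := by
    ext v
    simp [Sym2.mem_toFinset]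
  constructor
  · intro h K hK hne
    have := h K (Finset.coe_subset.2 hK) (Finset.coe_nonempty.2 hne)
    rwa [verts, ncard_coe_finset, ncard_coe_finset] at this
  · intro h K hK hne
    lift K to Finset (Sym2 V) using S.finite_toSet.subset hK
    rw [verts, ncard_coe_finset, ncard_coe_finset]
    exact h K (Finset.coe_subset.1 hK) (Finset.coe_nonempty.1 hne)

end Forest

theorem exists_forest_triangle_K4 : ∀ p q : Sym2 (Fin 4), ¬p.IsDiag → ¬q.IsDiag → p ≠ q →
    ∃ a b, ¬a.IsDiag ∧ ¬b.IsDiag ∧ a ∉ ({p, q} : Set _) ∧ b ∉ ({p, q} : Set _) ∧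
      IsForest {p, a, b} ∧ ¬IsForest {q, a, b} := by
  simp only [← Finset.coe_insert, ← Finset.coe_singleton, isForest_coe_iff, Finset.mem_coe]
  decide

theorem swapMap_image_insert {e f : α} {S : Set α} (he : e ∉ S) (hf : f ∉ S) :
    swapMap e f '' insert e S = insert f S := by
  have hS : EqOn (swapMap e f) id S := fun x hx => by
    simp [swapMap, ne_of_mem_of_not_mem hx he, ne_of_mem_of_not_mem hx hf]
  rw [image_insert_eq, hS.image_eq_self]
  simp [swapMap]

theorem Clones.indep_insert_iff {M : Matroid α} {e f : α} {S : Set α} (h : Clones M e f)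
    (he : e ∉ S) (hf : f ∉ S) : M.Indep (insert e S) ↔ M.Indep (insert f S) := by
  rw [h.2.2, swapMap_image_insert he hf]

/-- `M(K₄)` contains no pair of clones. -/
theorem MK4_no_clones {β : Type*} (N : Matroid β) (hN : IsMK4 N) :
    ¬ ∃ e f, e ≠ f ∧ Clones N e f := by
  rintro ⟨e, f, hef, hcl⟩
  obtain ⟨g, hbij, hind⟩ := hN
  have indep_iff : ∀ I ⊆ N.E, N.Indep I ↔ IsForest (g '' I) := fun I hI =>
    (hind I hI).trans (isForest_image_iff (hbij.injOn.mono hI)).symm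
  obtain ⟨_, _, ha, hb, hap, hbp, hforest, htriangle⟩ := exists_forest_triangle_K4 (g e) (g f)
    (hbij.mapsTo hcl.1) (hbij.mapsTo hcl.2.1) (hbij.injOn.ne hcl.1 hcl.2.1 hef)
  obtain ⟨a, haE, rfl⟩ := hbij.surjOn ha
  obtain ⟨b, hbE, rfl⟩ := hbij.surjOn hb
  have hab : {a, b} ⊆ N.E := pair_subset haE hbE
  have he : e ∉ ({a, b} : Set β) := by rintro (rfl | rfl) <;> simp_all
  have hf : f ∉ ({a, b} : Set β) := by rintro (rfl | rfl) <;> simp_all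
  have hswap := hcl.indep_insert_iff he hf
  rw [indep_iff _ (insert_subset hcl.1 hab), indep_iff _ (insert_subset hcl.2.1 hab)] at hswap
  simp only [image_insert_eq, image_singleton] at hswap
  exact htriangle (hswap.mp hforest)

end Paper
end
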